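/- Special case of the smoothing certificate for a binary threshold on linear classifiers: if h(x) = sign(w·x + b) and g(x) = sign(E_{δ~N(0,σ²I)}[h(x+δ)]), then g(x') = g(x) for all x' with ‖x'-x‖₂ < σ·|Φ⁻¹(P[h(x+δ)=g(x)])| (i.e., the certified radius of a smoothed linear classifier equals σ·Φ⁻¹(p) where p is the probability of the majority sign). -/

import Mathlib

open MeasureTheory ProbabilityTheory

/-- The isotropic Gaussian measure `N(0, σ²I_d)` on `ℝ^d`. -/
noncomputable def gaussVec (d : ℕ) (σ : ℝ) : Measure (Fin d → ℝ) :=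
  Measure.pi fun _ : Fin d => gaussianReal 0 (Real.toNNReal (σ ^ 2))

/-- Standard normal CDF `Φ`. -/
noncomputable def stdNormCDF (t : ℝ) : ℝ := ((gaussianReal 0 1) (Set.Iic t)).toReal

/-- Standard normal quantile function `Φ⁻¹`. -/
noncomputable def probit (p : ℝ) : ℝ := sInf {t : ℝ | p ≤ stdNormCDF t}

/-- Hard binary linear classifier `h(x) = sign(w·x + b)` (ties at 0 broken to `+1`). -/
noncomputable def linSign (d : ℕ) (w : Fin d → ℝ) (b : ℝ) (x : Fin d → ℝ) : ℝ :=
  if 0 ≤ (∑ i, w i * x i) + b then 1 else -1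

/-- Smoothed classifier: majority sign of `h(x+δ)`, `δ ~ N(0,σ²I)`. -/
noncomputable def smoothedSign (d : ℕ) (w : Fin d → ℝ) (b σ : ℝ) (x : Fin d → ℝ) : ℝ :=
  if (1:ℝ) / 2 ≤ ((gaussVec d σ) {δ | linSign d w b (x + δ) = 1}).toReal then 1 else -1

open Real
open scoped NNReal ENNReal

lemma pdf_conv_pointwise {v₁ v₂ : ℝ≥0} (hv₁ : v₁ ≠ 0) (hv₂ : v₂ ≠ 0) (z x : ℝ) :
    gaussianPDFReal 0 v₁ x * gaussianPDFReal 0 v₂ (z - x)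
      = gaussianPDFReal 0 (v₁ + v₂) z
        * gaussianPDFReal ((v₁ : ℝ) * z / ((v₁ : ℝ) + (v₂ : ℝ))) (v₁ * v₂ / (v₁ + v₂)) x := by
  have hA : 0 < (v₁ : ℝ) := NNReal.coe_pos.2 (pos_iff_ne_zero.mpr hv₁)
  have hB : 0 < (v₂ : ℝ) := NNReal.coe_pos.2 (pos_iff_ne_zero.mpr hv₂)
  have hAB : 0 < (v₁ : ℝ) + (v₂ : ℝ) := by linarith
  simp only [gaussianPDFReal, NNReal.coe_add, NNReal.coe_mul, NNReal.coe_div]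
  rw [mul_mul_mul_comm, mul_mul_mul_comm ((√(2 * π * ((v₁:ℝ) + v₂)))⁻¹)]
  congr 1
  · rw [← mul_inv, ← mul_inv, ← Real.sqrt_mul (by positivity), ← Real.sqrt_mul (by positivity)]
    congr 2
    field_simp
  · rw [← Real.exp_add, ← Real.exp_add]
    congr 1
    field_simp
    ring

lemma gauss_lintegral_conv {v₁ v₂ : ℝ≥0} (hv₁ : v₁ ≠ 0) (hv₂ : v₂ ≠ 0) (z : ℝ) :
    ∫⁻ x, gaussianPDF 0 v₁ x * gaussianPDF x v₂ z = gaussianPDF 0 (v₁ + v₂) z := by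
  have hv' : v₁ * v₂ / (v₁ + v₂) ≠ 0 := by
    refine div_ne_zero (mul_ne_zero hv₁ hv₂) ?_
    simp [hv₁]
  have key : ∀ x : ℝ, gaussianPDF 0 v₁ x * gaussianPDF x v₂ z
      = gaussianPDF 0 (v₁ + v₂) z
        * gaussianPDF ((v₁ : ℝ) * z / ((v₁ : ℝ) + (v₂ : ℝ))) (v₁ * v₂ / (v₁ + v₂)) x := by
    intro x
    simp only [gaussianPDF]
    rw [← ENNReal.ofReal_mul (gaussianPDFReal_nonneg _ _ _),
      ← ENNReal.ofReal_mul (gaussianPDFReal_nonneg _ _ _)]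
    congr 1
    have : gaussianPDFReal x v₂ z = gaussianPDFReal 0 v₂ (z - x) := by
      rw [gaussianPDFReal_sub, zero_add]
    rw [this, pdf_conv_pointwise hv₁ hv₂]
  simp_rw [key]
  rw [lintegral_const_mul _ (measurable_gaussianPDF _ _),
    lintegral_gaussianPDF_eq_one _ hv', mul_one]


lemma gauss_conv (v₁ v₂ : ℝ≥0) :
    Measure.map (fun p : ℝ × ℝ => p.1 + p.2) ((gaussianReal 0 v₁).prod (gaussianReal 0 v₂))
      = gaussianReal 0 (v₁ + v₂) := by
  have hadd : Measurable fun p : ℝ × ℝ => p.1 + p.2 := measurable_fst.add measurable_snd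
  by_cases hv₁ : v₁ = 0
  · subst hv₁
    rw [gaussianReal_zero_var, Measure.dirac_prod, Measure.map_map hadd measurable_prodMk_left,
      zero_add]
    have : (fun p : ℝ × ℝ => p.1 + p.2) ∘ Prod.mk (0:ℝ) = id := by funext y; simp
    rw [this, Measure.map_id]
  by_cases hv₂ : v₂ = 0
  · subst hv₂
    rw [gaussianReal_zero_var, Measure.prod_dirac, Measure.map_map hadd measurable_prodMk_right,
      add_zero]
    have : (fun p : ℝ × ℝ => p.1 + p.2) ∘ (fun x : ℝ => (x, (0:ℝ))) = id := by funext y; simp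
    rw [this, Measure.map_id]
  -- main case
  have hpdf2 : Measurable fun p : ℝ × ℝ => gaussianPDF p.1 v₂ p.2 := by
    have : Continuous fun p : ℝ × ℝ => gaussianPDFReal p.1 v₂ p.2 := by
      unfold gaussianPDFReal; fun_prop
    exact this.measurable.ennreal_ofReal
  ext s hs
  have hind : Measurable fun p : ℝ × ℝ => s.indicator (gaussianPDF p.1 v₂) p.2 := by
    have : (fun p : ℝ × ℝ => s.indicator (gaussianPDF p.1 v₂) p.2)
        = Set.indicator {p : ℝ × ℝ | p.2 ∈ s} (fun p => gaussianPDF p.1 v₂ p.2) := by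
      funext p
      by_cases hp : p.2 ∈ s <;> simp [Set.indicator, hp]
    rw [this]
    exact hpdf2.indicator (measurable_snd hs)
  rw [Measure.map_apply hadd hs, Measure.prod_apply (hadd hs)]
  have h1 : ∀ x : ℝ, (Prod.mk x ⁻¹' ((fun p : ℝ × ℝ => p.1 + p.2) ⁻¹' s))
      = (fun y => x + y) ⁻¹' s := fun x => rfl
  simp_rw [h1]
  have h2 : ∀ x : ℝ, gaussianReal 0 v₂ ((fun y => x + y) ⁻¹' s)
      = ∫⁻ z, s.indicator (gaussianPDF x v₂) z ∂volume := by
    intro x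
    rw [← Measure.map_apply (measurable_const_add x) hs, gaussianReal_map_const_add, zero_add,
      gaussianReal_apply _ hv₂, ← lintegral_indicator hs _]
  simp_rw [h2]
  rw [gaussianReal_of_var_ne_zero _ hv₁,
    lintegral_withDensity_eq_lintegral_mul _ (measurable_gaussianPDF _ _)
      (Measurable.lintegral_prod_right' hind)]
  simp only [Pi.mul_apply]
  have h4 : ∀ x : ℝ, gaussianPDF 0 v₁ x * ∫⁻ z, s.indicator (gaussianPDF x v₂) z ∂volume
      = ∫⁻ z, gaussianPDF 0 v₁ x * s.indicator (gaussianPDF x v₂) z ∂volume := by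
    intro x
    rw [lintegral_const_mul _ ((measurable_gaussianPDF x v₂).indicator hs)]
  simp_rw [h4]
  rw [lintegral_lintegral_swap]
  swap
  · exact ((measurable_gaussianPDF 0 v₁).comp measurable_fst |>.mul hind).aemeasurable
  have h5 : ∀ z : ℝ, ∫⁻ x, gaussianPDF 0 v₁ x * s.indicator (gaussianPDF x v₂) z ∂volume
      = s.indicator (gaussianPDF 0 (v₁ + v₂)) z := by
    intro z
    by_cases hz : z ∈ s
    · simp only [Set.indicator_of_mem hz]
      exact gauss_lintegral_conv hv₁ hv₂ z
    · simp [Set.indicator_of_notMem hz]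
  simp_rw [h5]
  rw [lintegral_indicator hs _, gaussianReal_apply _ (by simp [hv₁]) s]

lemma gauss_pi_map_sum (n : ℕ) (w : Fin n → ℝ) (v : ℝ≥0) :
    Measure.map (fun δ : Fin n → ℝ => ∑ i, w i * δ i)
        (Measure.pi fun _ => gaussianReal 0 v)
      = gaussianReal 0 ((∑ i, ‖w i‖₊ ^ 2) * v) := by
  induction n with
  | zero =>
      have h0 : (fun δ : Fin 0 → ℝ => ∑ i, w i * δ i) = fun _ => (0:ℝ) := by
        funext δ; simp
      rw [h0, Measure.map_const]
      simp
  | succ n ih =>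
      set e := MeasurableEquiv.piFinSuccAbove (fun _ : Fin (n+1) => ℝ) 0 with he
      have hp := measurePreserving_piFinSuccAbove (fun _ : Fin (n+1) => gaussianReal 0 v) 0
      have hsum : (fun δ : Fin (n+1) → ℝ => ∑ i, w i * δ i)
          = (fun p : ℝ × (Fin n → ℝ) => w 0 * p.1 + ∑ j, w j.succ * p.2 j) ∘ e := by
        funext δ
        simp only [e, Function.comp_apply, MeasurableEquiv.piFinSuccAbove_apply,
          Fin.zero_succAbove, Fin.sum_univ_succ]
        rfl
      have hg₂ : Measurable fun y : Fin n → ℝ => ∑ j, w j.succ * y j :=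
        Finset.measurable_sum _ fun j _ => (measurable_pi_apply j).const_mul _
      have hF : Measurable fun p : ℝ × (Fin n → ℝ) => w 0 * p.1 + ∑ j, w j.succ * p.2 j :=
        (measurable_fst.const_mul _).add (hg₂.comp measurable_snd)
      rw [hsum, ← Measure.map_map hF e.measurable, hp.map_eq]
      have hFdec : (fun p : ℝ × (Fin n → ℝ) => w 0 * p.1 + ∑ j, w j.succ * p.2 j)
          = (fun q : ℝ × ℝ => q.1 + q.2) ∘ Prod.map (fun t : ℝ => w 0 * t)
              (fun y : Fin n → ℝ => ∑ j, w j.succ * y j) := rfl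
      rw [hFdec, ← Measure.map_map (g := fun q : ℝ × ℝ => q.1 + q.2) (measurable_fst.add measurable_snd)
        ((measurable_const_mul _).prodMap hg₂),
        ← Measure.map_prod_map _ _ (measurable_const_mul _) hg₂,
        gaussianReal_map_const_mul, ih, mul_zero, gauss_conv]
      congr 1
      apply NNReal.coe_injective
      push_cast
      rw [Fin.sum_univ_succ]
      push_cast [Real.norm_eq_abs, sq_abs]
      ring

lemma gauss_singleton (u : ℝ) : gaussianReal 0 1 {u} = 0 :=
  gaussianReal_absolutelyContinuous 0 one_ne_zero (volume_singleton)


lemma gauss_map_neg : (gaussianReal 0 1).map (fun t : ℝ => -t) = gaussianReal 0 1 := by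
  have h := gaussianReal_map_const_mul (μ := 0) (v := 1) (-1)
  simp only [neg_mul, one_mul, mul_zero] at h
  convert h using 2
  apply NNReal.coe_injective
  push_cast
  norm_num


lemma gauss_Ioi_eq_Iic_neg (u : ℝ) :
    gaussianReal 0 1 (Set.Ioi u) = gaussianReal 0 1 (Set.Iic (-u)) := by
  conv_lhs => rw [← gauss_map_neg]
  rw [Measure.map_apply measurable_neg measurableSet_Ioi]
  have : (fun t : ℝ => -t) ⁻¹' Set.Ioi u = Set.Iio (-u) := by
    ext t; simp [lt_neg]
  rw [this]
  rw [← Set.Iio_union_right, measure_union (by simp) (measurableSet_singleton _),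
    gauss_singleton, add_zero]


lemma stdNormCDF_add_compl (u : ℝ) : stdNormCDF u + ((gaussianReal 0 1) (Set.Ioi u)).toReal = 1 := by
  have h : gaussianReal 0 1 (Set.Iic u) + gaussianReal 0 1 (Set.Ioi u) = 1 := by
    rw [← measure_union (by simp [Set.disjoint_left]) measurableSet_Ioi]
    simp [Set.Iic_union_Ioi]
  rw [stdNormCDF, ← ENNReal.toReal_add (measure_ne_top _ _) (measure_ne_top _ _), h,
    ENNReal.toReal_one]


lemma stdNormCDF_neg (u : ℝ) : stdNormCDF (-u) = 1 - stdNormCDF u := by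
  have := stdNormCDF_add_compl u
  rw [gauss_Ioi_eq_Iic_neg] at this
  have h2 : ((gaussianReal 0 1) (Set.Iic (-u))).toReal = stdNormCDF (-u) := rfl
  linarith


lemma stdNormCDF_strictMono : StrictMono stdNormCDF := by
  intro a b hab
  have hsplit : Set.Iic b = Set.Iic a ∪ Set.Ioc a b := by
    rw [Set.Iic_union_Ioc_eq_Iic hab.le]
  have hpos : gaussianReal 0 1 (Set.Ioc a b) ≠ 0 := by
    intro h0
    have := gaussianReal_absolutelyContinuous' 0 one_ne_zero h0
    rw [Real.volume_Ioc] at this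
    simp only [ENNReal.ofReal_eq_zero, sub_nonpos] at this
    exact absurd this (not_le.2 hab)
  have hdisj : Disjoint (Set.Iic a) (Set.Ioc a b) := by
    rw [Set.disjoint_left]
    intro t ht ht2
    exact absurd ht2.1 (not_lt.2 ht)
  have : gaussianReal 0 1 (Set.Iic b)
      = gaussianReal 0 1 (Set.Iic a) + gaussianReal 0 1 (Set.Ioc a b) := by
    rw [hsplit, measure_union hdisj measurableSet_Ioc]
  unfold stdNormCDF
  rw [this, ENNReal.toReal_add (measure_ne_top _ _) (measure_ne_top _ _)]
  have : 0 < (gaussianReal 0 1 (Set.Ioc a b)).toReal :=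
    ENNReal.toReal_pos hpos (measure_ne_top _ _)
  linarith


lemma stdNormCDF_zero : stdNormCDF 0 = 1 / 2 := by
  have h := stdNormCDF_neg 0
  rw [neg_zero] at h
  linarith


lemma stdNormCDF_half_le_iff (u : ℝ) : 1 / 2 ≤ stdNormCDF u ↔ 0 ≤ u := by
  rw [← stdNormCDF_zero]
  exact ⟨fun h => by by_contra hu; exact absurd h (not_le.2 (stdNormCDF_strictMono (not_le.1 hu))),
    fun h => stdNormCDF_strictMono.monotone h⟩


lemma probit_stdNormCDF (u : ℝ) : probit (stdNormCDF u) = u := by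
  have : {t : ℝ | stdNormCDF u ≤ stdNormCDF t} = Set.Ici u := by
    ext t
    simp [stdNormCDF_strictMono.le_iff_le]
  rw [probit, this, csInf_Ici]

lemma gauss_scale {V : ℝ≥0} (hV : V ≠ 0) :
    gaussianReal 0 V = (gaussianReal 0 1).map (fun t => Real.sqrt V * t) := by
  rw [gaussianReal_map_const_mul]
  congr 1
  · simp
  · apply NNReal.coe_injective
    push_cast
    rw [Real.sq_sqrt (by positivity)]
    simp


lemma gauss_Ici_toReal {V : ℝ≥0} (hV : V ≠ 0) (t : ℝ) :
    ((gaussianReal 0 V) (Set.Ici t)).toReal = stdNormCDF (-t / Real.sqrt V) := by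
  have hs : (0:ℝ) < Real.sqrt V := Real.sqrt_pos.2 (by positivity)
  rw [gauss_scale hV, Measure.map_apply (measurable_const_mul _) measurableSet_Ici]
  have hpre : (fun t' : ℝ => Real.sqrt V * t') ⁻¹' Set.Ici t = Set.Ici (t / Real.sqrt V) := by
    ext u
    simp only [Set.mem_preimage, Set.mem_Ici]
    rw [div_le_iff₀ hs, mul_comm]
  rw [hpre]
  rw [← Set.Ioi_union_left, measure_union (by simp) (measurableSet_singleton _), gauss_singleton, add_zero,
    gauss_Ioi_eq_Iic_neg, neg_div]
  rfl


lemma gauss_Iio_toReal {V : ℝ≥0} (hV : V ≠ 0) (t : ℝ) :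
    ((gaussianReal 0 V) (Set.Iio t)).toReal = stdNormCDF (t / Real.sqrt V) := by
  have hs : (0:ℝ) < Real.sqrt V := Real.sqrt_pos.2 (by positivity)
  rw [gauss_scale hV, Measure.map_apply (measurable_const_mul _) measurableSet_Iio]
  have hpre : (fun t' : ℝ => Real.sqrt V * t') ⁻¹' Set.Iio t = Set.Iio (t / Real.sqrt V) := by
    ext u
    simp only [Set.mem_preimage, Set.mem_Iio]
    rw [lt_div_iff₀ hs, mul_comm]
  rw [hpre]
  have hIic : gaussianReal 0 1 (Set.Iio (t / Real.sqrt V))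
      = gaussianReal 0 1 (Set.Iic (t / Real.sqrt V)) := by
    conv_rhs => rw [← Set.Iio_union_right]
    rw [measure_union (by simp) (measurableSet_singleton _), gauss_singleton, add_zero]
  rw [hIic]
  rfl


lemma gaussVec_halfspace_pos (d : ℕ) (σ : ℝ) (hσ : 0 < σ) (w : Fin d → ℝ) (hw : w ≠ 0) (c : ℝ) :
    ((gaussVec d σ) {δ | 0 ≤ (∑ i, w i * δ i) + c}).toReal
      = stdNormCDF (c / (σ * Real.sqrt (∑ i, (w i) ^ 2))) := by
  obtain ⟨i₀, hi₀⟩ := Function.ne_iff.1 hw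
  have hW : (∑ i, ‖w i‖₊ ^ 2) ≠ 0 := by
    intro h
    rw [Finset.sum_eq_zero_iff] at h
    exact hi₀ (by simpa using h i₀ (Finset.mem_univ _))
  have hV : (∑ i, ‖w i‖₊ ^ 2) * Real.toNNReal (σ ^ 2) ≠ 0 := by
    apply mul_ne_zero hW
    simp only [ne_eq, Real.toNNReal_eq_zero, not_le]
    positivity
  have hmeas : Measurable fun δ : Fin d → ℝ => ∑ i, w i * δ i :=
    Finset.measurable_sum _ fun i _ => (measurable_pi_apply i).const_mul _
  have hset : {δ : Fin d → ℝ | 0 ≤ (∑ i, w i * δ i) + c}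
      = (fun δ => ∑ i, w i * δ i) ⁻¹' Set.Ici (-c) := by
    ext δ; simp only [Set.mem_setOf_eq, Set.mem_preimage, Set.mem_Ici, neg_le]
    constructor <;> intro h <;> linarith
  have hsqrt : Real.sqrt ((((∑ i, ‖w i‖₊ ^ 2) * Real.toNNReal (σ ^ 2)) : ℝ≥0) : ℝ)
      = σ * Real.sqrt (∑ i, (w i) ^ 2) := by
    have hcoe : ((((∑ i, ‖w i‖₊ ^ 2) * Real.toNNReal (σ ^ 2)) : ℝ≥0) : ℝ)
        = (∑ i, (w i) ^ 2) * σ ^ 2 := by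
      push_cast [Real.coe_toNNReal _ (by positivity : (0:ℝ) ≤ σ ^ 2)]
      simp [Real.norm_eq_abs, sq_abs]
    rw [hcoe, Real.sqrt_mul (by positivity), Real.sqrt_sq hσ.le, mul_comm]
  rw [hset, ← Measure.map_apply hmeas measurableSet_Ici, gaussVec, gauss_pi_map_sum,
    gauss_Ici_toReal hV, hsqrt, neg_neg]


lemma gaussVec_halfspace_neg (d : ℕ) (σ : ℝ) (hσ : 0 < σ) (w : Fin d → ℝ) (hw : w ≠ 0) (c : ℝ) :
    ((gaussVec d σ) {δ | ¬ (0 ≤ (∑ i, w i * δ i) + c)}).toReal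
      = stdNormCDF (-c / (σ * Real.sqrt (∑ i, (w i) ^ 2))) := by
  obtain ⟨i₀, hi₀⟩ := Function.ne_iff.1 hw
  have hW : (∑ i, ‖w i‖₊ ^ 2) ≠ 0 := by
    intro h
    rw [Finset.sum_eq_zero_iff] at h
    exact hi₀ (by simpa using h i₀ (Finset.mem_univ _))
  have hV : (∑ i, ‖w i‖₊ ^ 2) * Real.toNNReal (σ ^ 2) ≠ 0 := by
    apply mul_ne_zero hW
    simp only [ne_eq, Real.toNNReal_eq_zero, not_le]
    positivity
  have hmeas : Measurable fun δ : Fin d → ℝ => ∑ i, w i * δ i :=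
    Finset.measurable_sum _ fun i _ => (measurable_pi_apply i).const_mul _
  have hset : {δ : Fin d → ℝ | ¬ (0 ≤ (∑ i, w i * δ i) + c)}
      = (fun δ => ∑ i, w i * δ i) ⁻¹' Set.Iio (-c) := by
    ext δ; simp only [Set.mem_setOf_eq, Set.mem_preimage, Set.mem_Iio, not_le, lt_neg]
    constructor <;> intro h <;> linarith
  have hsqrt : Real.sqrt ((((∑ i, ‖w i‖₊ ^ 2) * Real.toNNReal (σ ^ 2)) : ℝ≥0) : ℝ)
      = σ * Real.sqrt (∑ i, (w i) ^ 2) := by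
    have hcoe : ((((∑ i, ‖w i‖₊ ^ 2) * Real.toNNReal (σ ^ 2)) : ℝ≥0) : ℝ)
        = (∑ i, (w i) ^ 2) * σ ^ 2 := by
      push_cast [Real.coe_toNNReal _ (by positivity : (0:ℝ) ≤ σ ^ 2)]
      simp [Real.norm_eq_abs, sq_abs]
    rw [hcoe, Real.sqrt_mul (by positivity), Real.sqrt_sq hσ.le, mul_comm]
  rw [hset, ← Measure.map_apply hmeas measurableSet_Iio, gaussVec, gauss_pi_map_sum,
    gauss_Iio_toReal hV, hsqrt]

/-- certified radius of a smoothed linear classifier. For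
`g(x)` the majority sign of `h(x+δ) = sign(w·(x+δ)+b)`, we have `g(x') = g(x)` for all `x'`
with `‖x'-x‖₂ < σ·|Φ⁻¹(P[h(x+δ) = g(x)])|`. -/
theorem stmt_3 (d : ℕ) (w : Fin d → ℝ) (hw : w ≠ 0) (b σ : ℝ) (hσ : 0 < σ)
    (x x' : Fin d → ℝ)
    (hx' : Real.sqrt (∑ i, (x' i - x i) ^ 2)
      < σ * |probit (((gaussVec d σ)
          {δ | linSign d w b (x + δ) = smoothedSign d w b σ x}).toReal)|) :
    smoothedSign d w b σ x' = smoothedSign d w b σ x := by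
  obtain ⟨i₀, hi₀⟩ := Function.ne_iff.1 hw
  have hi₀' : w i₀ ≠ 0 := by simpa using hi₀
  have hsq : 0 < ∑ i, (w i) ^ 2 :=
    Finset.sum_pos' (fun i _ => sq_nonneg _) ⟨i₀, Finset.mem_univ _, by positivity⟩
  set R := Real.sqrt (∑ i, (w i) ^ 2) with hRdef
  have hR : 0 < R := Real.sqrt_pos.2 hsq
  have hA : 0 < σ * R := by positivity
  -- decompose the linear score after a shift
  have hshift : ∀ z δ : Fin d → ℝ,
      (∑ i, w i * (z + δ) i) + b = (∑ i, w i * δ i) + ((∑ i, w i * z i) + b) := by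
    intro z δ
    simp only [Pi.add_apply, mul_add, Finset.sum_add_distrib]
    ring
  have hsign1 : ∀ z : Fin d → ℝ, {δ : Fin d → ℝ | linSign d w b (z + δ) = 1}
      = {δ : Fin d → ℝ | 0 ≤ (∑ i, w i * δ i) + ((∑ i, w i * z i) + b)} := by
    intro z
    ext δ
    simp only [Set.mem_setOf_eq, linSign, hshift z δ]
    split_ifs with h
    · simp [h]
    · simp [h]; norm_num
  have hsign2 : ∀ z : Fin d → ℝ, {δ : Fin d → ℝ | linSign d w b (z + δ) = (-1 : ℝ)}
      = {δ : Fin d → ℝ | ¬ (0 ≤ (∑ i, w i * δ i) + ((∑ i, w i * z i) + b))} := by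
    intro z
    ext δ
    simp only [Set.mem_setOf_eq, linSign, hshift z δ]
    split_ifs with h
    · simp [h]; norm_num
    · simp [h]
  have hP1 : ∀ z : Fin d → ℝ,
      ((gaussVec d σ) {δ | linSign d w b (z + δ) = 1}).toReal
        = stdNormCDF (((∑ i, w i * z i) + b) / (σ * R)) := by
    intro z
    rw [hsign1 z, gaussVec_halfspace_pos d σ hσ w hw]
  have hsmooth : ∀ z : Fin d → ℝ,
      smoothedSign d w b σ z = if 0 ≤ (∑ i, w i * z i) + b then 1 else -1 := by
    intro z
    rw [smoothedSign, hP1 z]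
    congr 1
    rw [stdNormCDF_half_le_iff, eq_iff_iff, le_div_iff₀ hA, zero_mul]
  set S := (∑ i, w i * x i) + b with hSdef
  set S' := (∑ i, w i * x' i) + b with hS'def
  -- Cauchy–Schwarz bound
  have hdiff : S' - S = ∑ i, w i * (x' i - x i) := by
    simp only [hSdef, hS'def, mul_sub, Finset.sum_sub_distrib]
    ring
  have hCS : |S' - S| ≤ R * Real.sqrt (∑ i, (x' i - x i) ^ 2) := by
    rw [hdiff, ← Real.sqrt_sq_eq_abs]
    have h2 := Finset.sum_mul_sq_le_sq_mul_sq Finset.univ (fun i => w i) (fun i => x' i - x i)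
    calc Real.sqrt ((∑ i, w i * (x' i - x i)) ^ 2)
        ≤ Real.sqrt ((∑ i, (w i) ^ 2) * ∑ i, (x' i - x i) ^ 2) := Real.sqrt_le_sqrt h2
      _ = R * Real.sqrt (∑ i, (x' i - x i) ^ 2) := Real.sqrt_mul hsq.le _
  by_cases hS : 0 ≤ S
  · have hg : smoothedSign d w b σ x = 1 := by rw [hsmooth x]; exact if_pos hS
    rw [hg] at hx' ⊢
    rw [hP1 x, probit_stdNormCDF] at hx'
    have habs : |S / (σ * R)| = S / (σ * R) := abs_of_nonneg (div_nonneg hS hA.le)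
    rw [habs] at hx'
    have hval : σ * (S / (σ * R)) = S / R := by field_simp
    rw [hval] at hx'
    have hstep : |S' - S| < S := by
      have := mul_lt_mul_of_pos_left hx' hR
      rw [mul_div_cancel₀ _ hR.ne'] at this
      exact lt_of_le_of_lt hCS this
    have hS' : 0 ≤ S' := by
      have := (abs_lt.1 hstep).1
      linarith
    rw [hsmooth x']
    exact if_pos hS'
  · have hg : smoothedSign d w b σ x = -1 := by rw [hsmooth x]; exact if_neg hS
    rw [hg] at hx' ⊢
    have hPneg : ((gaussVec d σ) {δ | linSign d w b (x + δ) = (-1:ℝ)}).toReal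
        = stdNormCDF (-S / (σ * R)) := by
      rw [hsign2 x, gaussVec_halfspace_neg d σ hσ w hw]
    rw [hPneg, probit_stdNormCDF] at hx'
    have hSneg : S < 0 := not_le.1 hS
    have habs : |-S / (σ * R)| = -S / (σ * R) :=
      abs_of_nonneg (div_nonneg (by linarith) hA.le)
    rw [habs] at hx'
    have hval : σ * (-S / (σ * R)) = -S / R := by field_simp
    rw [hval] at hx'
    have hstep : |S' - S| < -S := by
      have := mul_lt_mul_of_pos_left hx' hR
      rw [mul_div_cancel₀ _ hR.ne'] at this
      exact lt_of_le_of_lt hCS this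
    have hS' : ¬ 0 ≤ S' := by
      have := (abs_lt.1 hstep).2
      intro h
      linarith
    rw [hsmooth x']
    exact if_neg hS'
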